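/- Let μ be a compactly supported Borel probability measure on ℝ with infinite support, let (p_k), (r_k), (a_k, b_k) and w be as in the context, and let J be the bounded Jacobi operator on ℓ²(ℤ≥0) with these coefficients. Then for every z ∈ ℂ ∖ ℝ the operator J − z is boundedly invertible and the k-th coordinate of (J − z)^{−1} e_0 equals w(z) p_k(z) + r_k(z) for every k ≥ 0; in particular ∫_ℝ (x − z)^{−1} dμ(x) = ⟨(J − z)^{−1} e_0, e_0⟩. -/

import Mathlib

open MeasureTheory Polynomial

noncomputable section

instance : Fact ((1 : ENNReal) ≤ 2) := ⟨one_le_two⟩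

def measSupport (μ : Measure ℝ) : Set ℝ := {x : ℝ | ∀ U ∈ nhds x, μ U ≠ 0}

/-- The Hilbert space `ℓ²(ℤ≥0)`. -/
abbrev JacobiH : Type := lp (fun _ : ℕ => ℂ) 2

/-- The standard orthonormal basis of `ℓ²(ℤ≥0)`. -/
def stdBasis (k : ℕ) : JacobiH := lp.single 2 k 1

/-!
The functions of the second kind `q_k(z) = ∫ p_k(x) / (x - z) dμ(x)` are the coefficients of
`x ↦ (x - z)⁻¹` with respect to the orthonormal system `(p_k)` of `L²(μ)`, so `q ∈ ℓ²` by Bessel's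
inequality. Writing `x / (x - z) = 1 + z / (x - z)` in the three-term recurrence shows that `q`
solves `(J - z) q = e₀` row by row, hence `q = (J - z)⁻¹ e₀`, the operator `J - z` being
invertible since `J` is self-adjoint. The sequence `w(z) p_k(z) + r_k(z)` solves the same rows,
and as `a_k ≠ 0` a solution is determined by its entry `q_0 = w(z)`.
-/

section Moments

variable {μ : Measure ℝ}

theorem integrable_eval_of_moments (hmom : ∀ m : ℕ, Integrable (fun x : ℝ => |x| ^ m) μ)
    (Q : ℝ[X]) : Integrable (fun x => Q.eval x) μ := by
  induction Q using Polynomial.induction_on' with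
  | add P Q hP hQ => simpa only [eval_add, Pi.add_def] using hP.add hQ
  | monomial n c =>
    have hpow : Integrable (fun x : ℝ => x ^ n) μ :=
      (hmom n).mono' (by fun_prop) (.of_forall fun x => by simp)
    simpa only [eval_monomial] using hpow.const_mul c

theorem memLp_two_eval_of_moments (hmom : ∀ m : ℕ, Integrable (fun x : ℝ => |x| ^ m) μ)
    (Q : ℝ[X]) : MemLp (fun x => ((Q.eval x : ℝ) : ℂ)) 2 μ := by
  refine (memLp_two_iff_integrable_sq_norm (by fun_prop)).2 ?_
  refine (integrable_eval_of_moments hmom (Q ^ 2)).congr (.of_forall fun x => ?_)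
  simp

end Moments

section CauchyKernel

variable {z : ℂ}

theorem ofReal_sub_ne_zero_of_im_ne_zero (hz : z.im ≠ 0) (x : ℝ) : (x : ℂ) - z ≠ 0 := fun h =>
  hz (by simpa using (congrArg Complex.im h).symm)

theorem continuous_inv_ofReal_sub (hz : z.im ≠ 0) : Continuous fun x : ℝ => ((x : ℂ) - z)⁻¹ :=
  (by fun_prop : Continuous fun x : ℝ => (x : ℂ) - z).inv₀ (ofReal_sub_ne_zero_of_im_ne_zero hz)

theorem norm_inv_ofReal_sub_le (hz : z.im ≠ 0) (x : ℝ) : ‖((x : ℂ) - z)⁻¹‖ ≤ |z.im|⁻¹ := by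
  rw [norm_inv]
  refine inv_anti₀ (abs_pos.2 hz) ?_
  simpa using Complex.abs_im_le_norm ((x : ℂ) - z)

variable {μ : Measure ℝ}

theorem memLp_inv_ofReal_sub [IsFiniteMeasure μ] (hz : z.im ≠ 0) :
    MemLp (fun x : ℝ => ((x : ℂ) - z)⁻¹) 2 μ :=
  .of_bound (continuous_inv_ofReal_sub hz).aestronglyMeasurable _
    (.of_forall (norm_inv_ofReal_sub_le hz))

theorem integrable_eval_mul_inv_ofReal_sub
    (hmom : ∀ m : ℕ, Integrable (fun x : ℝ => |x| ^ m) μ) (hz : z.im ≠ 0) (Q : ℝ[X]) :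
    Integrable (fun x : ℝ => ((Q.eval x : ℝ) : ℂ) * ((x : ℂ) - z)⁻¹) μ :=
  (integrable_eval_of_moments hmom Q).ofReal.mul_bdd
    (continuous_inv_ofReal_sub hz).aestronglyMeasurable
    (.of_forall (norm_inv_ofReal_sub_le hz))

end CauchyKernel

section Bessel

variable {α ι : Type*} [MeasurableSpace α] {μ : Measure α}

theorem MemLp.inner_toLp_toLp {f g : α → ℂ} (hf : MemLp f 2 μ) (hg : MemLp g 2 μ) :
    inner ℂ (hf.toLp f) (hg.toLp g) = ∫ x, starRingEnd ℂ (f x) * g x ∂μ := by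
  refine integral_congr_ae ?_
  filter_upwards [hf.coeFn_toLp, hg.coeFn_toLp] with x hfx hgx
  rw [hfx, hgx, RCLike.inner_apply, mul_comm]

theorem memℓp_two_integral_conj_mul [DecidableEq ι] {φ : ι → α → ℂ} (hφ : ∀ i, MemLp (φ i) 2 μ)
    (horth : ∀ i j, ∫ x, starRingEnd ℂ (φ i x) * φ j x ∂μ = if i = j then 1 else 0)
    {g : α → ℂ} (hg : MemLp g 2 μ) :
    Memℓp (fun i => ∫ x, starRingEnd ℂ (φ i x) * g x ∂μ) 2 := by
  have hon : Orthonormal ℂ fun i => (hφ i).toLp (φ i) :=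
    orthonormal_iff_ite.2 fun i j => by rw [MemLp.inner_toLp_toLp, horth]
  refine memℓp_gen ?_
  simpa [← MemLp.inner_toLp_toLp (hφ _) hg] using hon.inner_products_summable (hg.toLp g)

end Bessel

/-- `polyCauchyTransform μ z (p k)` is the function of the second kind
`∫ p_k(x) / (x - z) dμ(x)`. -/
def polyCauchyTransform (μ : Measure ℝ) (z : ℂ) (Q : ℝ[X]) : ℂ :=
  ∫ x, ((Q.eval x : ℝ) : ℂ) * ((x : ℂ) - z)⁻¹ ∂μ

section PolyCauchyTransform

variable {μ : Measure ℝ} {z : ℂ}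

theorem polyCauchyTransform_one : polyCauchyTransform μ z 1 = ∫ x : ℝ, ((x : ℂ) - z)⁻¹ ∂μ := by
  simp [polyCauchyTransform]

theorem polyCauchyTransform_C_mul (c : ℝ) (Q : ℝ[X]) :
    polyCauchyTransform μ z (C c * Q) = c * polyCauchyTransform μ z Q := by
  simp only [polyCauchyTransform, eval_mul, eval_C, Complex.ofReal_mul, mul_assoc,
    integral_const_mul]

variable (hmom : ∀ m : ℕ, Integrable (fun x : ℝ => |x| ^ m) μ) (hz : z.im ≠ 0)
include hmom hz

theorem polyCauchyTransform_add (P Q : ℝ[X]) :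
    polyCauchyTransform μ z (P + Q) = polyCauchyTransform μ z P + polyCauchyTransform μ z Q := by
  simp only [polyCauchyTransform, eval_add, Complex.ofReal_add, add_mul]
  exact integral_add (integrable_eval_mul_inv_ofReal_sub hmom hz P)
    (integrable_eval_mul_inv_ofReal_sub hmom hz Q)

theorem polyCauchyTransform_X_mul (Q : ℝ[X]) :
    polyCauchyTransform μ z (X * Q)
      = ∫ x, ((Q.eval x : ℝ) : ℂ) ∂μ + z * polyCauchyTransform μ z Q := by
  have hsplit : ∀ x : ℝ, (((X * Q).eval x : ℝ) : ℂ) * ((x : ℂ) - z)⁻¹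
      = ((Q.eval x : ℝ) : ℂ) + z * (((Q.eval x : ℝ) : ℂ) * ((x : ℂ) - z)⁻¹) := fun x => by
    have := ofReal_sub_ne_zero_of_im_ne_zero hz x
    push_cast [eval_mul, eval_X]
    field_simp
    ring
  simp only [polyCauchyTransform, hsplit]
  refine (integral_add (integrable_eval_of_moments hmom Q).ofReal
    ((integrable_eval_mul_inv_ofReal_sub hmom hz Q).const_mul z)).trans ?_
  rw [integral_const_mul]

end PolyCauchyTransform

section OrthonormalPolynomials

variable {μ : Measure ℝ}

theorem eq_one_of_degree_eq_zero_of_integral_sq [IsProbabilityMeasure μ] {P : ℝ[X]}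
    (hdeg : P.degree = 0) (hlead : 0 < P.leadingCoeff)
    (hnorm : ∫ x, P.eval x * P.eval x ∂μ = 1) : P = 1 := by
  obtain ⟨c, rfl⟩ : ∃ c, P = C c := ⟨_, eq_C_of_degree_le_zero hdeg.le⟩
  rw [leadingCoeff_C] at hlead
  have hc : c * c = 1 := by simpa using hnorm
  rw [(mul_self_eq_one_iff.1 hc).resolve_right (by linarith), C_1]

variable {p : ℕ → ℝ[X]}
  (horth : ∀ n m, ∫ x, (p n).eval x * (p m).eval x ∂μ = if n = m then 1 else 0)
include horth

theorem integral_eval_eq_ite_of_orthonormal (hp0 : p 0 = 1) (k : ℕ) :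
    ∫ x, (((p k).eval x : ℝ) : ℂ) ∂μ = if k = 0 then 1 else 0 := by
  rw [integral_complex_ofReal]
  simpa [hp0, apply_ite (fun t : ℝ => (t : ℂ))] using congrArg (fun t : ℝ => (t : ℂ)) (horth k 0)

theorem memℓp_two_polyCauchyTransform [IsFiniteMeasure μ]
    (hmom : ∀ m : ℕ, Integrable (fun x : ℝ => |x| ^ m) μ)
    {z : ℂ} (hz : z.im ≠ 0) : Memℓp (fun k => polyCauchyTransform μ z (p k)) 2 := by
  have horthC : ∀ j k, ∫ x, starRingEnd ℂ (((p j).eval x : ℝ) : ℂ) * (((p k).eval x : ℝ) : ℂ) ∂μ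
      = if j = k then 1 else 0 := fun j k => by
    simp only [Complex.conj_ofReal, ← Complex.ofReal_mul, integral_complex_ofReal, horth]
    split_ifs <;> simp
  simpa only [polyCauchyTransform, Complex.conj_ofReal] using memℓp_two_integral_conj_mul
    (fun k => memLp_two_eval_of_moments hmom (p k)) horthC (memLp_inv_ofReal_sub hz)

end OrthonormalPolynomials

/-- The rows of `(J - z) u = e₀` for the Jacobi matrix `J` with parameters `a, b`; `u` need not
be square summable. -/
def IsJacobiResolventSolution (a b : ℕ → ℝ) (z : ℂ) (u : ℕ → ℂ) : Prop :=
  (a 0 : ℂ) * u 1 + b 0 * u 0 - z * u 0 = 1 ∧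
    ∀ k, (a (k + 1) : ℂ) * u (k + 2) + b (k + 1) * u (k + 1) + a k * u k - z * u (k + 1) = 0

section JacobiRecurrence

variable {a b : ℕ → ℝ} {z : ℂ}

theorem IsJacobiResolventSolution.eq_of_apply_zero_eq (ha : ∀ k, a k ≠ 0) {u v : ℕ → ℂ}
    (hu : IsJacobiResolventSolution a b z u) (hv : IsJacobiResolventSolution a b z v)
    (h0 : u 0 = v 0) : u = v := by
  have ha' : ∀ k, (a k : ℂ) ≠ 0 := fun k => Complex.ofReal_ne_zero.2 (ha k)
  have hpair : ∀ k, u k = v k ∧ u (k + 1) = v (k + 1) := by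
    intro k
    induction k with
    | zero =>
      refine ⟨h0, mul_left_cancel₀ (ha' 0) ?_⟩
      linear_combination hu.1 - hv.1 + (z - b 0) * h0
    | succ k ih =>
      refine ⟨ih.2, mul_left_cancel₀ (ha' (k + 1)) ?_⟩
      linear_combination hu.2 k - hv.2 k + (z - b (k + 1)) * ih.2 - (a k : ℂ) * ih.1
  exact funext fun k => (hpair k).1

variable {p : ℕ → ℝ[X]} (hp0 : p 0 = 1)
  (hrec : ∀ k : ℕ, X * p (k + 1) =
    C (a (k + 1)) * p (k + 2) + C (b (k + 1)) * p (k + 1) + C (a k) * p k)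
  (hrec0 : X * p 0 = C (a 0) * p 1 + C (b 0) * p 0)
include hp0 hrec hrec0

theorem isJacobiResolventSolution_polyCauchyTransform {μ : Measure ℝ}
    (hmom : ∀ m : ℕ, Integrable (fun x : ℝ => |x| ^ m) μ) (hz : z.im ≠ 0)
    (horth : ∀ n m, ∫ x, (p n).eval x * (p m).eval x ∂μ = if n = m then 1 else 0) :
    IsJacobiResolventSolution a b z fun k => polyCauchyTransform μ z (p k) := by
  have hT := polyCauchyTransform_X_mul hmom hz
  have hadd := polyCauchyTransform_add hmom hz
  have hmean := integral_eval_eq_ite_of_orthonormal horth hp0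
  constructor
  · have h := hT (p 0)
    rw [hrec0, hadd, polyCauchyTransform_C_mul, polyCauchyTransform_C_mul, hmean, if_pos rfl] at h
    linear_combination h
  · intro k
    have h := hT (p (k + 1))
    rw [hrec k, hadd, hadd, polyCauchyTransform_C_mul, polyCauchyTransform_C_mul,
      polyCauchyTransform_C_mul, hmean, if_neg k.succ_ne_zero] at h
    linear_combination h

theorem isJacobiResolventSolution_aeval {r : ℕ → ℝ[X]} (hr0 : r 0 = 0) (hr1 : r 1 = C (a 0)⁻¹)
    (hrrec : ∀ k : ℕ, X * r (k + 1) =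
      C (a (k + 1)) * r (k + 2) + C (b (k + 1)) * r (k + 1) + C (a k) * r k)
    (ha0 : a 0 ≠ 0) (w : ℂ) :
    IsJacobiResolventSolution a b z fun k => w * aeval z (p k) + aeval z (r k) := by
  have haeval : ∀ {P Q : ℝ[X]}, P = Q → aeval z P = aeval z Q := congrArg (aeval z)
  constructor
  · have hp := haeval hrec0
    simp only [map_add, map_mul, aeval_X, aeval_C, Complex.coe_algebraMap, hp0, map_one] at hp
    simp only [hp0, hr0, hr1, map_one, map_zero, aeval_C, Complex.coe_algebraMap,
      Complex.ofReal_inv]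
    linear_combination -w * hp + mul_inv_cancel₀ (Complex.ofReal_ne_zero.2 ha0)
  · intro k
    have hp := haeval (hrec k)
    have hr := haeval (hrrec k)
    simp only [map_add, map_mul, aeval_X, aeval_C, Complex.coe_algebraMap] at hp hr
    linear_combination -w * hp - hr

end JacobiRecurrence

theorem IsSelfAdjoint.isUnit_sub_smul_one {A : Type*} [CStarAlgebra A] {a : A}
    (ha : IsSelfAdjoint a) {z : ℂ} (hz : z.im ≠ 0) : IsUnit (a - z • 1) := by
  have hσ : z ∉ spectrum ℂ a := fun h => hz (by rw [ha.mem_spectrum_eq_re h]; simp)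
  rw [spectrum.notMem_iff, Algebra.algebraMap_eq_smul_one, ← neg_sub] at hσ
  simpa using hσ.neg

section JacobiOperator

theorem coe_apply_eq_inner_stdBasis (u : JacobiH) (k : ℕ) :
    (u : ℕ → ℂ) k = inner ℂ (stdBasis k) u := by
  simp [stdBasis, lp.inner_single_left]

variable {J : JacobiH →L[ℂ] JacobiH} (hJsa : IsSelfAdjoint J)
include hJsa

theorem coe_apply_eq_inner_apply_stdBasis (u : JacobiH) (k : ℕ) :
    (J u : ℕ → ℂ) k = inner ℂ (J (stdBasis k)) u := by
  rw [coe_apply_eq_inner_stdBasis, ← ContinuousLinearMap.adjoint_inner_left, hJsa.adjoint_eq]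

theorem sub_smul_one_apply_eq_stdBasis_zero {a b : ℕ → ℝ}
    (hJe0 : J (stdBasis 0) = (a 0 : ℂ) • stdBasis 1 + (b 0 : ℂ) • stdBasis 0)
    (hJe : ∀ k : ℕ, J (stdBasis (k + 1)) = (a (k + 1) : ℂ) • stdBasis (k + 2)
      + (b (k + 1) : ℂ) • stdBasis (k + 1) + (a k : ℂ) • stdBasis k)
    {z : ℂ} {u : JacobiH} (hu : IsJacobiResolventSolution a b z u) :
    (J - z • (1 : JacobiH →L[ℂ] JacobiH)) u = stdBasis 0 := by
  refine lp.ext (funext fun k => ?_)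
  have hcoord : ((J - z • (1 : JacobiH →L[ℂ] JacobiH)) u : ℕ → ℂ) k
      = inner ℂ (J (stdBasis k)) u - z * (u : ℕ → ℂ) k := by
    rw [sub_apply, smul_apply, one_apply_eq_self, lp.coeFn_sub, Pi.sub_apply, lp.coeFn_smul,
      Pi.smul_apply, smul_eq_mul, coe_apply_eq_inner_apply_stdBasis hJsa]
  have he0 : (stdBasis 0 : ℕ → ℂ) k = if k = 0 then 1 else 0 := by
    simp [stdBasis, Pi.single_apply]
  rw [hcoord, he0]
  cases k with
  | zero =>
    simp only [hJe0, inner_add_left, inner_smul_left, Complex.conj_ofReal,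
      ← coe_apply_eq_inner_stdBasis, if_pos]
    linear_combination hu.1
  | succ k =>
    simp only [hJe, inner_add_left, inner_smul_left, Complex.conj_ofReal,
      ← coe_apply_eq_inner_stdBasis, if_neg k.succ_ne_zero]
    linear_combination hu.2 k

end JacobiOperator

theorem resolvent_asymptotically_free_solution (μ : Measure ℝ) [IsProbabilityMeasure μ]
    (hmom : ∀ m : ℕ, Integrable (fun x : ℝ => |x| ^ m) μ)
    (p : ℕ → Polynomial ℝ)
    (hdeg : ∀ n, (p n).degree = n)
    (hlead : ∀ n, 0 < (p n).leadingCoeff)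
    (horth : ∀ n m, ∫ x, (p n).eval x * (p m).eval x ∂μ = if n = m then 1 else 0)
    (a b : ℕ → ℝ) (hapos : ∀ k, 0 < a k)
    (hrec : ∀ k : ℕ, X * p (k + 1) =
      C (a (k + 1)) * p (k + 2) + C (b (k + 1)) * p (k + 1) + C (a k) * p k)
    (hrec0 : X * p 0 = C (a 0) * p 1 + C (b 0) * p 0)
    (r : ℕ → Polynomial ℝ)
    (hr0 : r 0 = 0) (hr1 : r 1 = C (a 0)⁻¹)
    (hrrec : ∀ k : ℕ, X * r (k + 1) =
      C (a (k + 1)) * r (k + 2) + C (b (k + 1)) * r (k + 1) + C (a k) * r k)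
    (J : JacobiH →L[ℂ] JacobiH) (hJsa : IsSelfAdjoint J)
    (hJe : ∀ k : ℕ, J (stdBasis k) = (a k : ℂ) • stdBasis (k + 1) + (b k : ℂ) • stdBasis k
      + (match k with
         | 0 => (0 : JacobiH)
         | (j + 1) => (a j : ℂ) • stdBasis j)) :
    ∀ z : ℂ, z.im ≠ 0 →
      IsUnit (J - z • (1 : JacobiH →L[ℂ] JacobiH)) ∧
      (∀ k : ℕ, ((Ring.inverse (J - z • (1 : JacobiH →L[ℂ] JacobiH)) (stdBasis 0)
          : JacobiH) : ℕ → ℂ) k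
        = (∫ x : ℝ, ((x : ℂ) - z)⁻¹ ∂μ) * Polynomial.aeval z (p k)
          + Polynomial.aeval z (r k)) ∧
      (∫ x : ℝ, ((x : ℂ) - z)⁻¹ ∂μ)
        = @inner ℂ _ _ (stdBasis 0)
            (Ring.inverse (J - z • (1 : JacobiH →L[ℂ] JacobiH)) (stdBasis 0)) := by
  intro z hz
  have hp0 : p 0 = 1 :=
    eq_one_of_degree_eq_zero_of_integral_sq (hdeg 0) (hlead 0) (by simpa using horth 0 0)
  have ha : ∀ k, a k ≠ 0 := fun k => (hapos k).ne'
  set R := J - z • (1 : JacobiH →L[ℂ] JacobiH)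
  have hunit : IsUnit R := hJsa.isUnit_sub_smul_one hz
  let V : JacobiH := ⟨_, memℓp_two_polyCauchyTransform horth hmom hz⟩
  have hV : IsJacobiResolventSolution a b z V :=
    isJacobiResolventSolution_polyCauchyTransform hp0 hrec hrec0 hmom hz horth
  have hRV : R V = stdBasis 0 :=
    sub_smul_one_apply_eq_stdBasis_zero hJsa (by simpa using hJe 0) (fun k => hJe (k + 1)) hV
  have hinvV : Ring.inverse R (stdBasis 0) = V := by
    rw [← hRV, ← mul_apply_eq_comp, Ring.inverse_mul_cancel _ hunit, one_apply_eq_self]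
  have hVcoord : (V : ℕ → ℂ) = fun k =>
      (∫ x : ℝ, ((x : ℂ) - z)⁻¹ ∂μ) * aeval z (p k) + aeval z (r k) :=
    hV.eq_of_apply_zero_eq ha
      (isJacobiResolventSolution_aeval hp0 hrec hrec0 hr0 hr1 hrrec (ha 0) _)
      (by simp [V, hp0, hr0, polyCauchyTransform_one])
  refine ⟨hunit, fun k => by rw [hinvV, hVcoord], ?_⟩
  rw [hinvV, ← coe_apply_eq_inner_stdBasis, hVcoord]
  simp [hp0, hr0]
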